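/- For the logistic map f(x) = a x(1−x) with a = 3.71, if x₀ = 1/2ⁿ for a positive integer n, then there exists an integer m with 0 ≤ m ≤ 2n such that the m-th iterate satisfies fᵐ(x₀) > 1/2. -/
import Mathlib


/-- For the logistic map `f(x) = 3.71 x (1-x)` with `x₀ = 2^{-n}` for a positive
integer `n`, there exists `m` with `0 ≤ m ≤ 2n` such that `fᵐ(x₀) > 1/2`. -/
theorem logistic_amplification (n : ℕ) (hn : 0 < n)
    (f : ℝ → ℝ) (hf : ∀ x, f x = 3.71 * x * (1 - x)) :
    ∃ m : ℕ, m ≤ 2 * n ∧ f^[m] ((2 : ℝ) ^ (-(n : ℤ))) > 1 / 2 := by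
  by_contra h
  push_neg at h
  set x₀ : ℝ := (2:ℝ) ^ (-(n:ℤ)) with hx₀
  have hx₀pos : 0 < x₀ := by positivity
  have key : ∀ m, m ≤ 2*n → (1.855:ℝ)^m * x₀ ≤ f^[m] x₀ := by
    intro m
    induction m with
    | zero => intro _; simp
    | succ k ih =>
      intro hk
      have hk' : k ≤ 2*n := Nat.le_of_succ_le hk
      have h1 := ih hk'
      have h2 := h k hk'
      have hpos : 0 < f^[k] x₀ := lt_of_lt_of_le (by positivity) h1
      rw [Function.iterate_succ_apply', hf]
      have he : (1.855:ℝ)^(k+1) * x₀ = 1.855 * ((1.855:ℝ)^k * x₀) := by ring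
      rw [he]
      nlinarith [h1, h2, hpos]
  have h2n := key (2*n) le_rfl
  have hle := h (2*n) le_rfl
  have hx₀eq : x₀ = ((2:ℝ)^n)⁻¹ := by
    rw [hx₀, zpow_neg, zpow_natCast]
  have hbig : (1:ℝ) ≤ (1.855:ℝ)^(2*n) * x₀ := by
    rw [hx₀eq, ← div_eq_mul_inv, le_div_iff₀ (by positivity)]
    calc (1:ℝ) * 2^n = 2^n := by ring
    _ ≤ ((1.855:ℝ)^2)^n := by
        apply pow_le_pow_left₀ (by norm_num)
        norm_num
    _ = (1.855:ℝ)^(2*n) := by rw [← pow_mul]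
  linarith
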